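/- Let G be a weighted directed graph on vertex set {1,…,N} with Laplacian L, suppose G has a rooted-out branch, and let w ∈ ℝ^N be the left eigenvector of the zero eigenvalue, i.e., w^T L = 0 with w ≠ 0. Then for q_0 ∈ ℝ^{nN}, one has (w^T ⊗ I_n) q_0 = 0 if and only if q_0 lies in the column space of L ⊗ I_n; equivalently, lim_{t→∞} exp(−t(L ⊗ I_n)) q_0 = 0 if and only if q_0 lies in the column space of L ⊗ I_n. -/

import Mathlib

/-!
For `t ≥ 0` the matrix `exp (-t L)` is row-stochastic, since `-L` has nonnegative off-diagonal
entries and zero row sums, and the rooted-out branch makes the column of the root in `exp (-L)`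
strictly positive. Doeblin's contraction argument then shows that `exp (-t L) x` converges to a
constant vector for every `x`. Hence `ker L` consists of the constant vectors, `L` has rank
`N - 1`, and its column space, which lies in `{x | w ⬝ᵥ x = 0}` because `wᵀ L = 0`, is that whole
hyperplane. Finally `w ⬝ᵥ exp (-t L) x = w ⬝ᵥ x` is conserved, while for `x = L y` we get
`exp (-t L) L y = L exp (-t L) y → L (c • 1) = 0`. Tensoring with `Iₙ` acts column by column.
-/

open scoped Kronecker

/-- The Laplacian of the weighted directed graph on `Fin N` with weights `a`. -/
def graphLaplacian {N : ℕ} (a : Fin N → Fin N → ℝ) : Matrix (Fin N) (Fin N) ℝ :=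
  Matrix.of fun i j => if i = j then ∑ k ∈ Finset.univ.erase i, a i k else -(a i j)

/-- `G` has a rooted-out branch: some vertex has a directed path to every other vertex
(information flows from `j` to `i` along an edge when `a i j > 0`). -/
def hasRootedOutBranch {N : ℕ} (a : Fin N → Fin N → ℝ) : Prop :=
  ∃ r : Fin N, ∀ v : Fin N, Relation.ReflTransGen (fun u v => 0 < a v u) r v

open Matrix NormedSpace Filter Topology
open scoped Nat

theorem exists_tendsto_const_of_squeeze {ι : Type*} [Fintype ι] {x : ℕ → ι → ℝ} {m M : ℕ → ℝ}
    (hm : Monotone m) (hM : Antitone M) (hmM : m ≤ M) (hmx : ∀ k i, m k ≤ x k i)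
    (hxM : ∀ k i, x k i ≤ M k) (hgap : Tendsto (M - m) atTop (𝓝 0)) :
    ∃ c : ℝ, Tendsto x atTop (𝓝 (c • 1)) := by
  have hc := Set.mem_iInter.1 (hm.ciSup_mem_iInter_Icc_of_antitone hM hmM)
  refine ⟨⨆ k, m k, tendsto_iff_norm_sub_tendsto_zero.2 <|
    squeeze_zero (fun _ => norm_nonneg _) (fun k => ?_) hgap⟩
  refine (pi_norm_le_iff_of_nonneg (sub_nonneg.2 (hmM k))).2 fun i => ?_
  rw [Real.norm_eq_abs, abs_le, Pi.sub_apply, Pi.smul_apply, Pi.one_apply, smul_eq_mul, mul_one]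
  constructor <;> linarith [hmx k i, hxM k i, (hc k).1, (hc k).2]

namespace Matrix

variable {ι : Type*}

def IsMetzler (A : Matrix ι ι ℝ) : Prop :=
  ∀ i j, i ≠ j → 0 ≤ A i j

theorem IsMetzler.smul {A : Matrix ι ι ℝ} (hA : A.IsMetzler) {t : ℝ} (ht : 0 ≤ t) :
    (t • A).IsMetzler :=
  fun i j hij => mul_nonneg ht (hA i j hij)

section

variable [Fintype ι] [DecidableEq ι]

theorem hasSum_exp (A : Matrix ι ι ℝ) : HasSum (fun k : ℕ => (k !⁻¹ : ℝ) • A ^ k) (exp A) :=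
  open scoped Norms.Operator in exp_series_hasSum_exp' A

theorem exp_mulVec_of_mulVec_eq_zero {A : Matrix ι ι ℝ} {x : ι → ℝ} (hx : A *ᵥ x = 0) :
    exp A *ᵥ x = x := by
  have hpow : ∀ k ≠ 0, ((k !⁻¹ : ℝ) • A ^ k) *ᵥ x = 0 := fun k hk => by
    rw [← Nat.succ_pred_eq_of_ne_zero hk, pow_succ, smul_mulVec, ← mulVec_mulVec, hx,
      mulVec_zero, smul_zero]
  have hsum := (hasSum_exp A).map (mulVec.addMonoidHomLeft x)
    (continuous_id.matrix_mulVec continuous_const)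
  have hsingle := hasSum_single 0 hpow
  simp only [Nat.factorial_zero, Nat.cast_one, inv_one, pow_zero, one_smul, one_mulVec] at hsingle
  exact hsum.unique hsingle

theorem vecMul_exp_of_vecMul_eq_zero {A : Matrix ι ι ℝ} {x : ι → ℝ} (hx : x ᵥ* A = 0) :
    x ᵥ* exp A = x := by
  rw [← mulVec_transpose, ← exp_transpose, exp_mulVec_of_mulVec_eq_zero (by rwa [mulVec_transpose])]

theorem inv_factorial_mul_pow_apply_le_exp_apply {B : Matrix ι ι ℝ} (hB : ∀ i j, 0 ≤ B i j)
    (k : ℕ) (i j : ι) : (k !⁻¹ : ℝ) * (B ^ k) i j ≤ exp B i j := by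
  have hsum : HasSum (fun k : ℕ => (k !⁻¹ : ℝ) * (B ^ k) i j) (exp B i j) :=
    Pi.hasSum.mp (Pi.hasSum.mp (hasSum_exp B) i) j
  exact le_hasSum hsum k fun l _ => mul_nonneg (by positivity) (pow_apply_nonneg hB l i j)

theorem exp_smul_one_add (c : ℝ) (A : Matrix ι ι ℝ) :
    exp (c • (1 : Matrix ι ι ℝ) + A) = Real.exp c • exp A := by
  rw [exp_add_of_commute _ _ ((Commute.one_left A).smul_left c), smul_one_eq_diagonal,
    exp_diagonal, Pi.exp_def, ← Real.exp_eq_exp_ℝ, ← smul_one_eq_diagonal, smul_one_mul]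

-- A step `u → u` imposes nothing, so the graph's paths may use self-loops `0 < a u u` even
-- though the diagonal of `-L` is not positive.
theorem pow_apply_pos_of_reflTransGen {B : Matrix ι ι ℝ} (hB : ∀ i j, 0 ≤ B i j) {r v : ι}
    (h : Relation.ReflTransGen (fun u v => u ≠ v → 0 < B v u) r v) : ∃ k, 0 < (B ^ k) v r := by
  induction h with
  | refl => exact ⟨0, by simp⟩
  | @tail u v _ hstep ih =>
    obtain ⟨k, hk⟩ := ih
    by_cases huv : u = v
    · exact huv ▸ ⟨k, hk⟩
    refine ⟨k + 1, ?_⟩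
    rw [pow_succ', mul_apply]
    exact lt_of_lt_of_le (mul_pos (hstep huv) hk) <| Finset.single_le_sum
      (fun l _ => mul_nonneg (hB v l) (pow_apply_nonneg hB k l r)) (Finset.mem_univ u)

namespace IsMetzler

variable {A : Matrix ι ι ℝ}

theorem exists_exp_eq_smul_exp (hA : A.IsMetzler) :
    ∃ c : ℝ, ∃ B : Matrix ι ι ℝ, (∀ i j, 0 ≤ B i j) ∧ (∀ i j, i ≠ j → B i j = A i j) ∧
      exp A = Real.exp (-c) • exp B := by
  set c := ∑ k, |A k k|
  refine ⟨c, c • 1 + A, fun i j => ?_, fun i j hij => by simp [hij], ?_⟩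
  · rcases eq_or_ne i j with rfl | hij
    · have := Finset.single_le_sum (fun k _ => abs_nonneg (A k k)) (Finset.mem_univ i)
      simp only [add_apply, smul_apply, one_apply_eq, smul_eq_mul, mul_one]
      linarith [neg_abs_le (A i i)]
    · simpa [hij] using hA i j hij
  · rw [← exp_smul_one_add, ← add_assoc, ← add_smul, neg_add_cancel, zero_smul, zero_add]

theorem exp_apply_nonneg (hA : A.IsMetzler) (i j : ι) : 0 ≤ exp A i j := by
  obtain ⟨c, B, hB, -, hexp⟩ := hA.exists_exp_eq_smul_exp
  rw [hexp, smul_apply, smul_eq_mul]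
  exact mul_nonneg (Real.exp_pos _).le <|
    (mul_nonneg (by positivity) (pow_apply_nonneg hB 0 i j)).trans
      (inv_factorial_mul_pow_apply_le_exp_apply hB 0 i j)

theorem exp_apply_pos (hA : A.IsMetzler) {r v : ι}
    (h : Relation.ReflTransGen (fun u v => u ≠ v → 0 < A v u) r v) : 0 < exp A v r := by
  obtain ⟨c, B, hB, hBA, hexp⟩ := hA.exists_exp_eq_smul_exp
  obtain ⟨k, hk⟩ := pow_apply_pos_of_reflTransGen hB <|
    Relation.ReflTransGen.mono (fun u v huv hne => (hBA v u (Ne.symm hne)).symm ▸ huv hne) r v h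
  rw [hexp, smul_apply, smul_eq_mul]
  exact mul_pos (Real.exp_pos _) <|
    (mul_pos (by positivity) hk).trans_le (inv_factorial_mul_pow_apply_le_exp_apply hB k v r)

theorem exp_mem_rowStochastic (hA : A.IsMetzler) (hA1 : A *ᵥ 1 = 0) :
    exp A ∈ rowStochastic ℝ ι :=
  ⟨hA.exp_apply_nonneg, exp_mulVec_of_mulVec_eq_zero hA1⟩

end IsMetzler

section RowStochastic

variable {P : Matrix ι ι ℝ}

theorem mulVec_apply_le_of_le (hP : P ∈ rowStochastic ℝ ι) {r : ι} {δ : ℝ}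
    (hδ : ∀ i, δ ≤ P i r) {x : ι → ℝ} {M : ℝ} (hx : ∀ j, x j ≤ M) (i : ι) :
    (P *ᵥ x) i ≤ δ * x r + (1 - δ) * M := by
  have hrest : ∀ j, 0 ≤ P i j - (Pi.single r δ : ι → ℝ) j := fun j => by
    rcases eq_or_ne j r with rfl | hj
    · simpa using hδ i
    · simpa [hj] using nonneg_of_mem_rowStochastic hP
  have hmass : ∑ j, (P i j - (Pi.single r δ : ι → ℝ) j) = 1 - δ := by
    simp [Finset.sum_sub_distrib, sum_row_of_mem_rowStochastic hP i]
  calc (P *ᵥ x) i = δ * x r + ∑ j, (P i j - (Pi.single r δ : ι → ℝ) j) * x j := by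
        simp [mulVec, dotProduct, sub_mul, Finset.sum_sub_distrib, Pi.single_apply]
    _ ≤ δ * x r + ∑ j, (P i j - (Pi.single r δ : ι → ℝ) j) * M := by
        gcongr with j
        · exact hrest j
        · exact hx j
    _ = δ * x r + (1 - δ) * M := by rw [← Finset.sum_mul, hmass]

theorem le_mulVec_apply_of_le (hP : P ∈ rowStochastic ℝ ι) {r : ι} {δ : ℝ}
    (hδ : ∀ i, δ ≤ P i r) {x : ι → ℝ} {m : ℝ} (hx : ∀ j, m ≤ x j) (i : ι) :
    δ * x r + (1 - δ) * m ≤ (P *ᵥ x) i := by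
  have := mulVec_apply_le_of_le hP hδ (x := -x) (M := -m) (fun j => neg_le_neg (hx j)) i
  simp only [mulVec_neg, Pi.neg_apply] at this
  linarith

theorem norm_mulVec_le_of_mem_rowStochastic (hP : P ∈ rowStochastic ℝ ι) (x : ι → ℝ) :
    ‖P *ᵥ x‖ ≤ ‖x‖ := by
  have hcol : ∀ i i', 0 ≤ P i' i := fun _ _ => nonneg_of_mem_rowStochastic hP
  have hx : ∀ j, |x j| ≤ ‖x‖ := fun j => (Real.norm_eq_abs (x j)).symm ▸ norm_le_pi_norm x j
  refine (pi_norm_le_iff_of_nonneg (norm_nonneg x)).2 fun i => abs_le.2 ⟨?_, ?_⟩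
  · simpa using le_mulVec_apply_of_le hP (hcol i) (fun j => neg_le_of_abs_le (hx j)) i
  · simpa using mulVec_apply_le_of_le hP (hcol i) (fun j => le_of_abs_le (hx j)) i

end RowStochastic

theorem exists_tendsto_pow_mulVec_of_le_apply {P : Matrix ι ι ℝ}
    (hP : P ∈ rowStochastic ℝ ι) {r : ι} {δ : ℝ} (hδ0 : 0 < δ) (hδ : ∀ i, δ ≤ P i r)
    (x : ι → ℝ) : ∃ c : ℝ, Tendsto (fun k : ℕ => (P ^ k) *ᵥ x) atTop (𝓝 (c • 1)) := by
  have : Nonempty ι := ⟨r⟩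
  set y : ℕ → ι → ℝ := fun k => (P ^ k) *ᵥ x
  have hy : ∀ k, y (k + 1) = P *ᵥ y k := fun k => by simp only [y, pow_succ', mulVec_mulVec]
  set m : ℕ → ℝ := fun k => Finset.univ.inf' Finset.univ_nonempty (y k)
  set M : ℕ → ℝ := fun k => Finset.univ.sup' Finset.univ_nonempty (y k)
  have hmy : ∀ k i, m k ≤ y k i := fun k i => Finset.inf'_le _ (Finset.mem_univ i)
  have hyM : ∀ k i, y k i ≤ M k := fun k i => Finset.le_sup' _ (Finset.mem_univ i)
  have hlow : ∀ k, δ * y k r + (1 - δ) * m k ≤ m (k + 1) := fun k =>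
    Finset.le_inf' _ _ fun i _ => hy k ▸ le_mulVec_apply_of_le hP hδ (hmy k) i
  have hup : ∀ k, M (k + 1) ≤ δ * y k r + (1 - δ) * M k := fun k =>
    Finset.sup'_le _ _ fun i _ => hy k ▸ mulVec_apply_le_of_le hP hδ (hyM k) i
  have hδ1 : δ ≤ 1 := (hδ r).trans (le_one_of_mem_rowStochastic hP)
  have hgap : ∀ k, M k - m k ≤ (1 - δ) ^ k * (M 0 - m 0) := by
    intro k
    induction k with
    | zero => simp
    | succ k ih =>
      calc M (k + 1) - m (k + 1) ≤ (1 - δ) * (M k - m k) := by linarith [hlow k, hup k]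
        _ ≤ (1 - δ) * ((1 - δ) ^ k * (M 0 - m 0)) := by gcongr
        _ = (1 - δ) ^ (k + 1) * (M 0 - m 0) := by ring
  have hpow : Tendsto (fun k => (1 - δ) ^ k * (M 0 - m 0)) atTop (𝓝 0) := by
    simpa using (tendsto_pow_atTop_nhds_zero_of_lt_one (by linarith) (by linarith)).mul_const
      (M 0 - m 0)
  refine exists_tendsto_const_of_squeeze (monotone_nat_of_le_succ fun k => ?_)
    (antitone_nat_of_succ_le fun k => ?_) (fun k => (hmy k r).trans (hyM k r)) hmy hyM
    (squeeze_zero (fun k => sub_nonneg.2 ((hmy k r).trans (hyM k r))) hgap hpow)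
  · nlinarith [hlow k, hmy k r]
  · nlinarith [hup k, hyM k r]

theorem tendsto_exp_smul_mulVec_of_tendsto_pow {A : Matrix ι ι ℝ}
    (hA : ∀ t : ℝ, 0 ≤ t → exp (t • A) ∈ rowStochastic ℝ ι) {x : ι → ℝ} {c : ℝ}
    (hc : Tendsto (fun k : ℕ => (exp A ^ k) *ᵥ x) atTop (𝓝 (c • 1))) :
    Tendsto (fun t : ℝ => exp (t • A) *ᵥ x) atTop (𝓝 (c • 1)) := by
  rw [tendsto_iff_norm_sub_tendsto_zero] at hc ⊢
  refine squeeze_zero' (Eventually.of_forall fun _ => norm_nonneg _) ?_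
    (hc.comp tendsto_nat_floor_atTop)
  filter_upwards [eventually_ge_atTop 0] with t ht
  set k := ⌊t⌋₊
  have hs : exp ((t - k) • A) ∈ rowStochastic ℝ ι := hA _ (sub_nonneg.2 (Nat.floor_le ht))
  have hsplit : exp (t • A) = exp ((t - k) • A) * exp A ^ k := by
    rw [← exp_nsmul, ← exp_add_of_commute _ _ (((Commute.refl A).smul_left _).smul_right _),
      ← Nat.cast_smul_eq_nsmul ℝ, ← add_smul, sub_add_cancel]
  calc ‖exp (t • A) *ᵥ x - c • 1‖
      = ‖exp ((t - k) • A) *ᵥ ((exp A ^ k) *ᵥ x - c • 1)‖ := by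
        rw [mulVec_sub, mulVec_smul, one_vecMul_of_mem_rowStochastic hs, mulVec_mulVec, hsplit]
    _ ≤ ‖(exp A ^ k) *ᵥ x - c • 1‖ := norm_mulVec_le_of_mem_rowStochastic hs _

end

section Kronecker

variable {κ R : Type*} [Fintype ι] [Fintype κ] [DecidableEq κ] [Semiring R]

theorem kronecker_one_mulVec_apply (A : Matrix ι ι R) (y : ι × κ → R) (i : ι) (k : κ) :
    (A ⊗ₖ (1 : Matrix κ κ R) *ᵥ y) (i, k) = (A *ᵥ fun j => y (j, k)) i := by
  simp [mulVec, dotProduct, Fintype.sum_prod_type, one_apply]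

theorem exp_kronecker_one [DecidableEq ι] (A : Matrix ι ι ℝ) :
    exp (A ⊗ₖ (1 : Matrix κ κ ℝ)) = exp A ⊗ₖ (1 : Matrix κ κ ℝ) := by
  rw [kronecker_one, kronecker_one, exp_blockDiagonal]
  congr 1
  funext k
  exact open scoped Norms.Operator in Pi.coe_exp _ k

theorem exists_kronecker_one_mulVec_eq_iff (A : Matrix ι ι R) (q : ι × κ → R) :
    (∃ y, A ⊗ₖ (1 : Matrix κ κ R) *ᵥ y = q) ↔ ∀ k, ∃ y, A *ᵥ y = fun i => q (i, k) := by
  constructor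
  · rintro ⟨y, rfl⟩ k
    exact ⟨fun j => y (j, k), funext fun i => (kronecker_one_mulVec_apply A y i k).symm⟩
  · intro h
    choose y hy using h
    exact ⟨fun p => y p.2 p.1, funext fun ⟨i, k⟩ =>
      (kronecker_one_mulVec_apply A _ i k).trans (congrFun (hy k) i)⟩

theorem tendsto_kronecker_one_mulVec_nhds_zero_iff [TopologicalSpace R] {α : Type*}
    {l : Filter α} (f : α → Matrix ι ι R) (q : ι × κ → R) :
    Tendsto (fun s => f s ⊗ₖ (1 : Matrix κ κ R) *ᵥ q) l (𝓝 0) ↔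
      ∀ k, Tendsto (fun s => f s *ᵥ fun i => q (i, k)) l (𝓝 0) := by
  simp only [tendsto_pi_nhds, Prod.forall, kronecker_one_mulVec_apply, Pi.zero_apply]
  exact forall_comm

end Kronecker

end Matrix

section GraphLaplacian

variable {N : ℕ} {a : Fin N → Fin N → ℝ}

theorem graphLaplacian_apply_of_ne {i j : Fin N} (hij : i ≠ j) :
    graphLaplacian a i j = -a i j :=
  if_neg hij

theorem graphLaplacian_mulVec_one : graphLaplacian a *ᵥ 1 = 0 := by
  funext i
  have hdiag : graphLaplacian a i i = ∑ k ∈ Finset.univ.erase i, a i k := if_pos rfl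
  simp only [mulVec, dotProduct, Pi.one_apply, mul_one, Pi.zero_apply]
  rw [← Finset.add_sum_erase _ _ (Finset.mem_univ i), hdiag, Finset.sum_congr rfl fun j hj =>
    graphLaplacian_apply_of_ne (Finset.ne_of_mem_erase hj).symm, Finset.sum_neg_distrib,
    add_neg_cancel]

theorem isMetzler_neg_graphLaplacian (ha : ∀ i j, 0 ≤ a i j) : (-graphLaplacian a).IsMetzler :=
  fun i j hij => by simpa [graphLaplacian_apply_of_ne hij] using ha i j

theorem exp_smul_neg_graphLaplacian_mem_rowStochastic (ha : ∀ i j, 0 ≤ a i j) {t : ℝ}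
    (ht : 0 ≤ t) : exp (t • -graphLaplacian a) ∈ rowStochastic ℝ (Fin N) :=
  ((isMetzler_neg_graphLaplacian ha).smul ht).exp_mem_rowStochastic <| by
    rw [smul_mulVec, neg_mulVec, graphLaplacian_mulVec_one, neg_zero, smul_zero]

theorem exp_neg_graphLaplacian_apply_pos (ha : ∀ i j, 0 ≤ a i j) {r v : Fin N}
    (h : Relation.ReflTransGen (fun u v => 0 < a v u) r v) : 0 < exp (-graphLaplacian a) v r :=
  (isMetzler_neg_graphLaplacian ha).exp_apply_pos <| Relation.ReflTransGen.mono
    (fun u v huv hne => by simpa [graphLaplacian_apply_of_ne (Ne.symm hne)] using huv) r v h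

theorem exists_tendsto_exp_neg_smul_graphLaplacian_mulVec (ha : ∀ i j, 0 ≤ a i j)
    (hroot : hasRootedOutBranch a) (x : Fin N → ℝ) :
    ∃ c : ℝ, Tendsto (fun t : ℝ => exp ((-t) • graphLaplacian a) *ᵥ x) atTop (𝓝 (c • 1)) := by
  obtain ⟨r, hr⟩ := hroot
  have : Nonempty (Fin N) := ⟨r⟩
  have hP := exp_smul_neg_graphLaplacian_mem_rowStochastic ha zero_le_one
  rw [one_smul] at hP
  set δ := Finset.univ.inf' Finset.univ_nonempty fun v => exp (-graphLaplacian a) v r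
  have hδ0 : 0 < δ :=
    (Finset.lt_inf'_iff _).2 fun v _ => exp_neg_graphLaplacian_apply_pos ha (hr v)
  obtain ⟨c, hc⟩ := exists_tendsto_pow_mulVec_of_le_apply hP hδ0
    (fun i => Finset.inf'_le _ (Finset.mem_univ i)) x
  refine ⟨c, ?_⟩
  simpa only [neg_smul, smul_neg] using tendsto_exp_smul_mulVec_of_tendsto_pow
    (fun t ht => exp_smul_neg_graphLaplacian_mem_rowStochastic ha ht) hc

theorem exists_eq_const_of_graphLaplacian_mulVec_eq_zero (ha : ∀ i j, 0 ≤ a i j)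
    (hroot : hasRootedOutBranch a) {y : Fin N → ℝ} (hy : graphLaplacian a *ᵥ y = 0) :
    ∃ c : ℝ, y = c • 1 := by
  obtain ⟨c, hc⟩ := exists_tendsto_exp_neg_smul_graphLaplacian_mulVec ha hroot y
  have hfix : ∀ t : ℝ, exp ((-t) • graphLaplacian a) *ᵥ y = y := fun t =>
    exp_mulVec_of_mulVec_eq_zero (by rw [smul_mulVec, hy, smul_zero])
  simp only [hfix] at hc
  exact ⟨c, tendsto_nhds_unique tendsto_const_nhds hc⟩

theorem range_mulVecLin_graphLaplacian (ha : ∀ i j, 0 ≤ a i j) (hroot : hasRootedOutBranch a)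
    {w : Fin N → ℝ} (hw0 : w ≠ 0) (hwL : w ᵥ* graphLaplacian a = 0) :
    LinearMap.range (graphLaplacian a).mulVecLin = LinearMap.ker (dotProductEquiv ℝ (Fin N) w) := by
  have : Nonempty (Fin N) := hroot.elim fun r _ => ⟨r⟩
  have hker : LinearMap.ker (graphLaplacian a).mulVecLin = ℝ ∙ 1 := by
    refine le_antisymm (fun y hy => ?_)
      ((Submodule.span_singleton_le_iff_mem _ _).2 graphLaplacian_mulVec_one)
    obtain ⟨c, rfl⟩ := exists_eq_const_of_graphLaplacian_mulVec_eq_zero ha hroot hy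
    exact Submodule.smul_mem _ c (Submodule.mem_span_singleton_self 1)
  have hrank := LinearMap.finrank_range_add_finrank_ker (graphLaplacian a).mulVecLin
  have hdot := Module.Dual.finrank_ker_add_one_of_ne_zero
    ((dotProductEquiv ℝ (Fin N)).map_ne_zero_iff.2 hw0)
  rw [hker, finrank_span_singleton one_ne_zero] at hrank
  refine Submodule.eq_of_le_of_finrank_eq ?_ (by omega)
  rintro _ ⟨y, rfl⟩
  simp [dotProduct_mulVec, hwL]

theorem exists_graphLaplacian_mulVec_eq_iff (ha : ∀ i j, 0 ≤ a i j)
    (hroot : hasRootedOutBranch a) {w : Fin N → ℝ} (hw0 : w ≠ 0)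
    (hwL : w ᵥ* graphLaplacian a = 0) (x : Fin N → ℝ) :
    (∃ y, graphLaplacian a *ᵥ y = x) ↔ w ⬝ᵥ x = 0 := by
  simpa using SetLike.ext_iff.1 (range_mulVecLin_graphLaplacian ha hroot hw0 hwL) x

theorem tendsto_exp_neg_smul_graphLaplacian_mulVec_nhds_zero_iff (ha : ∀ i j, 0 ≤ a i j)
    (hroot : hasRootedOutBranch a) {w : Fin N → ℝ} (hw0 : w ≠ 0)
    (hwL : w ᵥ* graphLaplacian a = 0) (x : Fin N → ℝ) :
    Tendsto (fun t : ℝ => exp ((-t) • graphLaplacian a) *ᵥ x) atTop (𝓝 0) ↔ w ⬝ᵥ x = 0 := by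
  constructor
  · intro h
    have hconserved : ∀ t : ℝ, w ⬝ᵥ (exp ((-t) • graphLaplacian a) *ᵥ x) = w ⬝ᵥ x := fun t => by
      rw [dotProduct_mulVec, vecMul_exp_of_vecMul_eq_zero (by rw [vecMul_smul, hwL, smul_zero])]
    have hdot : Continuous fun y : Fin N → ℝ => w ⬝ᵥ y := continuous_const.dotProduct continuous_id
    have hlim := (hdot.tendsto 0).comp h
    simp only [Function.comp_def, hconserved, dotProduct_zero] at hlim
    exact tendsto_nhds_unique tendsto_const_nhds hlim
  · intro hx
    obtain ⟨y, rfl⟩ := (exists_graphLaplacian_mulVec_eq_iff ha hroot hw0 hwL x).2 hx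
    obtain ⟨c, hc⟩ := exists_tendsto_exp_neg_smul_graphLaplacian_mulVec ha hroot y
    have hcomm : ∀ t : ℝ, exp ((-t) • graphLaplacian a) *ᵥ (graphLaplacian a *ᵥ y) =
        graphLaplacian a *ᵥ (exp ((-t) • graphLaplacian a) *ᵥ y) := fun t => by
      rw [mulVec_mulVec, mulVec_mulVec, ((Commute.refl _).smul_left (-t)).exp_left.eq]
    have hL : Continuous fun v : Fin N → ℝ => graphLaplacian a *ᵥ v :=
      continuous_const.matrix_mulVec continuous_id
    have hlim := (hL.tendsto _).comp hc
    simpa only [Function.comp_def, hcomm, mulVec_smul, graphLaplacian_mulVec_one,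
      smul_zero] using hlim

end GraphLaplacian

/-- for a graph with a rooted-out branch and left eigenvector `w` of the zero
eigenvalue of `L`, one has `(wᵀ ⊗ Iₙ) q₀ = 0` iff `q₀` is in the column space of `L ⊗ Iₙ`;
equivalently `exp(−t(L ⊗ Iₙ)) q₀ → 0` iff `q₀` is in the column space of `L ⊗ Iₙ`. -/
theorem left_eigenvector_kernel_iff_column_space
    (N n : ℕ) (a : Fin N → Fin N → ℝ) (ha : ∀ i j, 0 ≤ a i j)
    (L : Matrix (Fin N) (Fin N) ℝ) (hL : L = graphLaplacian a)
    (hroot : hasRootedOutBranch a)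
    (w : Fin N → ℝ) (hw0 : w ≠ 0) (hwL : Matrix.vecMul w L = 0)
    (q0 : Fin N × Fin n → ℝ) :
    (((fun k : Fin n => ∑ i : Fin N, w i * q0 (i, k)) = 0) ↔
      ∃ y : Fin N × Fin n → ℝ,
        (L ⊗ₖ (1 : Matrix (Fin n) (Fin n) ℝ)).mulVec y = q0) ∧
    ((Filter.Tendsto
        (fun t : ℝ =>
          (NormedSpace.exp ((-t) • (L ⊗ₖ (1 : Matrix (Fin n) (Fin n) ℝ)))).mulVec q0)
        Filter.atTop (nhds 0)) ↔
      ∃ y : Fin N × Fin n → ℝ,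
        (L ⊗ₖ (1 : Matrix (Fin n) (Fin n) ℝ)).mulVec y = q0) := by
  subst hL
  have hcolumn : ∀ k, (∃ y, graphLaplacian a *ᵥ y = fun i => q0 (i, k)) ↔
      w ⬝ᵥ (fun i => q0 (i, k)) = 0 :=
    fun k => exists_graphLaplacian_mulVec_eq_iff ha hroot hw0 hwL _
  rw [exists_kronecker_one_mulVec_eq_iff]
  constructor
  · exact funext_iff.trans (forall_congr' fun k => (hcolumn k).symm)
  · simp_rw [← smul_kronecker, exp_kronecker_one, tendsto_kronecker_one_mulVec_nhds_zero_iff]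
    exact forall_congr' fun k =>
      (tendsto_exp_neg_smul_graphLaplacian_mulVec_nhds_zero_iff ha hroot hw0 hwL _).trans
        (hcolumn k).symm
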